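/- arXiv:1609.05863 — 5 statements merged into one kernel-verified Lean document; each statement's English description precedes it below -/
import Mathlib

section
/- For all integers n ≥ 1 and m ≥ 1, the integral ∫₀¹ t^{n-1} (ln(1-t))^m dt equals (-1)^m · m! / n times the multiple harmonic star number ζ*_n({1}_m) = ∑_{n ≥ k₁ ≥ k₂ ≥ ⋯ ≥ k_m ≥ 1} 1/(k₁k₂⋯k_m). -/
/-- Multiple harmonic star number (weakly decreasing indices). -/
noncomputable def mhStar : List ℝ → ℕ → ℝ
  | [], _ => 1
  | s :: t, n => ∑ k ∈ Finset.Icc 1 n, (1 / (k : ℝ) ^ s) * mhStar t k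

/-!
After the substitution `t = 1 - x` the integral becomes
`I(n, m) = ∫₀¹ (1 - x)^n (log x)^m dx`. Integrating by parts against `d/dx (x (1 - x)^(n+1))`
gives `(n + 2) I(n+1, m+1) = (n + 1) I(n, m+1) - (m + 1) I(n+1, m)`, so
`(-1)^m (n + 1) I(n, m) / m!` satisfies the recurrence
`ζ*_{n+1}({1}_{m+1}) = ζ*_n({1}_{m+1}) + ζ*_{n+1}({1}_m) / (n + 1)` of the harmonic star numbers,
with the same initial values.
-/

open Real Filter Topology MeasureTheory intervalIntegral

lemma mhStar_cons_zero (s : ℝ) (t : List ℝ) : mhStar (s :: t) 0 = 0 := by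
  simp [mhStar]

lemma mhStar_cons_succ (s : ℝ) (t : List ℝ) (n : ℕ) :
    mhStar (s :: t) (n + 1)
      = mhStar (s :: t) n + 1 / ((n + 1 : ℕ) : ℝ) ^ s * mhStar t (n + 1) :=
  Finset.sum_Icc_succ_top (by omega) _

lemma tendsto_mul_log_pow_nhdsGT_zero (k : ℕ) :
    Tendsto (fun x : ℝ => x * log x ^ k) (𝓝[>] 0) (𝓝 0) := by
  rcases k.eq_zero_or_pos with rfl | hk
  · simp only [pow_zero, mul_one]
    exact tendsto_id.mono_right nhdsWithin_le_nhds
  · have hk' : (k : ℝ) ≠ 0 := by positivity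
    have h := (tendsto_log_mul_rpow_nhdsGT_zero (r := 1 / k) (by positivity)).pow k
    rw [zero_pow hk.ne'] at h
    refine h.congr' ?_
    filter_upwards [self_mem_nhdsWithin] with x (hx : 0 < x)
    rw [mul_pow, ← rpow_natCast (x ^ _), ← rpow_mul hx.le, one_div_mul_cancel hk', rpow_one,
      mul_comm]

lemma neg_log_pow_le_mul_rpow {x : ℝ} (hx₀ : 0 < x) (hx₁ : x ≤ 1) (m : ℕ) :
    (-log x) ^ m ≤ 2 ^ m * m.factorial * x ^ (-(1 / 2) : ℝ) := by
  have hy : 0 ≤ -log x / 2 := by linarith [log_nonpos hx₀.le hx₁]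
  have h := pow_div_factorial_le_exp _ hy m
  rw [div_le_iff₀ (by positivity), div_pow] at h
  rw [rpow_def_of_pos hx₀]
  calc (-log x) ^ m = 2 ^ m * ((-log x) ^ m / 2 ^ m) := by field_simp
    _ ≤ 2 ^ m * (exp (-log x / 2) * m.factorial) := by gcongr
    _ = _ := by ring_nf

lemma intervalIntegrable_log_pow (m : ℕ) :
    IntervalIntegrable (fun x : ℝ => log x ^ m) volume 0 1 := by
  refine IntervalIntegrable.mono_fun' (g := fun x => 2 ^ m * m.factorial * x ^ (-(1 / 2) : ℝ))
    ((intervalIntegrable_rpow' (by norm_num)).const_mul _)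
    (measurable_log.pow_const m).aestronglyMeasurable ?_
  filter_upwards [ae_restrict_mem measurableSet_uIoc] with x hx
  rw [Set.uIoc_of_le zero_le_one] at hx
  rw [norm_pow, norm_eq_abs, abs_of_nonpos (log_nonpos hx.1.le hx.2)]
  exact neg_log_pow_le_mul_rpow hx.1 hx.2 m

lemma continuousOn_mul_mul_log_pow {q : ℝ → ℝ} (hq : Continuous q) (k : ℕ) :
    ContinuousOn (fun x => x * q x * log x ^ k) (Set.Icc 0 1) := by
  intro x hx
  rcases hx.1.eq_or_lt with rfl | hx₀
  · have h := ((hq.tendsto 0).mono_left nhdsWithin_le_nhds).mul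
      (tendsto_mul_log_pow_nhdsGT_zero k)
    rw [mul_zero] at h
    refine (continuousWithinAt_Ioi_iff_Ici.mp ?_).mono Set.Icc_subset_Ici_self
    simpa only [ContinuousWithinAt, zero_mul, mul_left_comm, mul_assoc] using h
  · exact ((continuousAt_id.mul hq.continuousAt).mul
      ((continuousAt_log hx₀.ne').pow k)).continuousWithinAt

/-- Integration by parts against `(x q(x))' = q + x q'`: the boundary terms vanish because
`log 1 = 0` and `x (log x)^k → 0` as `x → 0⁺`. -/
lemma integral_add_mul_deriv_mul_log_pow {q q' : ℝ → ℝ} (hq : ∀ x, HasDerivAt q (q' x) x)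
    (hq' : Continuous q') (m : ℕ) :
    ∫ x in (0 : ℝ)..1, (q x + x * q' x) * log x ^ (m + 1)
      = -((m + 1) * ∫ x in (0 : ℝ)..1, q x * log x ^ m) := by
  have hqc : Continuous q := continuous_iff_continuousAt.mpr fun x => (hq x).continuousAt
  have hderiv : ∀ x ∈ Set.Ioo (0 : ℝ) 1, HasDerivAt (fun x => x * q x * log x ^ (m + 1))
      ((q x + x * q' x) * log x ^ (m + 1) + (m + 1) * (q x * log x ^ m)) x := by
    intro x hx
    refine (((hasDerivAt_id' x).fun_mul (hq x)).fun_mul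
      ((hasDerivAt_log hx.1.ne').fun_pow (m + 1))).congr_deriv ?_
    rw [Nat.add_sub_cancel]
    field_simp [hx.1.ne']
    push_cast
    ring
  have hint₁ : IntervalIntegrable (fun x => (q x + x * q' x) * log x ^ (m + 1)) volume 0 1 :=
    (intervalIntegrable_log_pow (m + 1)).continuousOn_mul (by fun_prop)
  have hint₂ : IntervalIntegrable (fun x => q x * log x ^ m) volume 0 1 :=
    (intervalIntegrable_log_pow m).continuousOn_mul hqc.continuousOn
  have hftc := integral_eq_sub_of_hasDerivAt_of_le zero_le_one
    (continuousOn_mul_mul_log_pow hqc (m + 1)) hderiv (hint₁.add (hint₂.const_mul _))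
  rw [integral_add hint₁ (hint₂.const_mul _), intervalIntegral.integral_const_mul] at hftc
  simp only [log_one, log_zero, zero_pow (Nat.succ_ne_zero m), mul_zero, zero_mul, sub_self]
    at hftc
  linarith

lemma integral_one_sub_pow (n : ℕ) : ∫ x in (0 : ℝ)..1, (1 - x) ^ n = 1 / (n + 1) := by
  simp [integral_comp_sub_left fun x => x ^ n, integral_pow]

lemma integral_log_pow_succ (m : ℕ) :
    ∫ x in (0 : ℝ)..1, log x ^ (m + 1) = -((m + 1) * ∫ x in (0 : ℝ)..1, log x ^ m) := by
  simpa using integral_add_mul_deriv_mul_log_pow (fun x => hasDerivAt_const x (1 : ℝ))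
    continuous_const m

lemma integral_one_sub_pow_mul_log_pow_succ (n m : ℕ) :
    (n + 2) * ∫ x in (0 : ℝ)..1, (1 - x) ^ (n + 1) * log x ^ (m + 1)
      = (n + 1) * (∫ x in (0 : ℝ)..1, (1 - x) ^ n * log x ^ (m + 1))
        - (m + 1) * ∫ x in (0 : ℝ)..1, (1 - x) ^ (n + 1) * log x ^ m := by
  have hq : ∀ x : ℝ, HasDerivAt (fun x => (1 - x) ^ (n + 1)) (-((n + 1) * (1 - x) ^ n)) x := by
    intro x
    simpa using ((hasDerivAt_id' x).const_sub 1).fun_pow (n + 1)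
  have h := integral_add_mul_deriv_mul_log_pow hq (by fun_prop) m
  have hint : ∀ k j : ℕ,
      IntervalIntegrable (fun x : ℝ => (1 - x) ^ k * log x ^ j) volume 0 1 :=
    fun k j => (intervalIntegrable_log_pow j).continuousOn_mul (by fun_prop)
  have hsplit : ∀ x : ℝ, ((1 - x) ^ (n + 1) + x * -((n + 1) * (1 - x) ^ n)) * log x ^ (m + 1)
      = (n + 2) * ((1 - x) ^ (n + 1) * log x ^ (m + 1))
        - (n + 1) * ((1 - x) ^ n * log x ^ (m + 1)) := fun x => by ring
  simp only [hsplit] at h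
  rw [intervalIntegral.integral_sub ((hint _ _).const_mul _) ((hint _ _).const_mul _),
    intervalIntegral.integral_const_mul, intervalIntegral.integral_const_mul] at h
  linarith

theorem mul_integral_one_sub_pow_mul_log_pow (n m : ℕ) :
    (n + 1) * ∫ x in (0 : ℝ)..1, (1 - x) ^ n * log x ^ m
      = (-1) ^ m * m.factorial * mhStar (List.replicate m 1) (n + 1) := by
  induction m generalizing n with
  | zero =>
    simp only [pow_zero, mul_one, integral_one_sub_pow, Nat.factorial_zero, Nat.cast_one,
      List.replicate_zero, mhStar]
    field_simp
  | succ m ihm =>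
    induction n with
    | zero =>
      have ihm_zero := ihm 0
      simp only [pow_zero, one_mul, CharP.cast_eq_zero, zero_add] at ihm_zero ⊢
      rw [integral_log_pow_succ, List.replicate_succ, mhStar_cons_succ, mhStar_cons_zero,
        ihm_zero, Nat.factorial_succ]
      push_cast
      ring
    | succ n ihn =>
      have hrec := integral_one_sub_pow_mul_log_pow_succ n m
      have ihm_succ := ihm (n + 1)
      rw [List.replicate_succ, mhStar_cons_succ, ← List.replicate_succ, rpow_one]
      rw [Nat.factorial_succ] at ihn ⊢
      push_cast at hrec ihm_succ ihn ⊢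
      field_simp
      linear_combination (n + 2) * hrec + (n + 2) * ihn - (m + 1) * ihm_succ

theorem stmt_0_general (n m : ℕ) (hn : 1 ≤ n) :
    ∫ t in (0:ℝ)..1, t ^ (n - 1) * (Real.log (1 - t)) ^ m
      = (-1 : ℝ) ^ m * (Nat.factorial m) / n * mhStar (List.replicate m 1) n := by
  obtain ⟨k, rfl⟩ := Nat.exists_eq_add_of_le' hn
  have hsub : ∫ t in (0 : ℝ)..1, t ^ k * log (1 - t) ^ m
      = ∫ x in (0 : ℝ)..1, (1 - x) ^ k * log x ^ m := by
    simpa using integral_comp_sub_left (a := 0) (b := 1) (fun x => (1 - x) ^ k * log x ^ m) 1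
  have hk : ((k + 1 : ℕ) : ℝ) ≠ 0 := by positivity
  rw [Nat.add_sub_cancel, hsub, div_mul_eq_mul_div, eq_div_iff hk, mul_comm, Nat.cast_succ,
    mul_integral_one_sub_pow_mul_log_pow]

theorem stmt_0 (n m : ℕ) (hn : 1 ≤ n) (hm : 1 ≤ m) :
    ∫ t in (0:ℝ)..1, t ^ (n - 1) * (Real.log (1 - t)) ^ m
      = (-1 : ℝ) ^ m * (Nat.factorial m) / n * mhStar (List.replicate m 1) n :=
  stmt_0_general n m hn
end

section
/- For all integers n ≥ 1, ∫₀¹ x^{n-1} ln x · ln(1-x) dx = H_n/n² - (ζ(2) - ζ_n(2))/n, where ζ(2) = π²/6 and ζ_n(2) = ∑_{j=1}^n 1/j². -/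
/-!
Expanding `log (1 - x) = -∑ x ^ (k + 1) / (k + 1)` and integrating termwise with
`∫₀¹ x ^ m log x = -1 / (m + 1) ^ 2` turns the integral into
`∑ₖ 1 / ((k + 1) (n + k + 1) ^ 2)`; termwise integration is legitimate because all terms
have the same sign on `(0, 1)`. By partial fractions this series is `1 / n ^ 2` times the
telescoping series `∑ₖ (1 / (k + 1) - 1 / (n + k + 1)) = H_n` minus
`1 / n` times the tail `ζ(2) - ζ_n(2)`.
-/

open MeasureTheory Filter Topology Finset Real

lemma intervalIntegrable_pow_mul_log (m : ℕ) (a b : ℝ) :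
    IntervalIntegrable (fun x : ℝ => x ^ m * log x) volume a b :=
  intervalIntegral.intervalIntegrable_log'.continuousOn_mul (continuous_pow m).continuousOn

lemma integral_pow_mul_log (m : ℕ) :
    ∫ x in (0 : ℝ)..1, x ^ m * log x = -1 / ((m : ℝ) + 1) ^ 2 := by
  let F : ℝ → ℝ := fun x => x ^ (m + 1) * log x / (m + 1) - x ^ (m + 1) / (m + 1) ^ 2
  have hF : ContinuousOn F (Set.Icc 0 1) := by
    have hF_eq : F = fun x => x ^ m * (x * log x) / (m + 1) - x ^ (m + 1) / (m + 1) ^ 2 := by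
      funext x
      ring
    rw [hF_eq]
    exact (((continuous_pow m).mul continuous_mul_log).div_const _ |>.sub
      ((continuous_pow _).div_const _)).continuousOn
  have hF' : ∀ x ∈ Set.Ioo (0 : ℝ) 1, HasDerivAt F (x ^ m * log x) x := by
    intro x hx
    refine ((((hasDerivAt_pow (m + 1) x).mul (hasDerivAt_log hx.1.ne')).div_const _).sub
      ((hasDerivAt_pow (m + 1) x).div_const _)).congr_deriv ?_
    field_simp [hx.1.ne']
    push_cast
    ring
  rw [intervalIntegral.integral_eq_sub_of_hasDerivAt_of_le zero_le_one hF hF'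
    (intervalIntegrable_pow_mul_log m 0 1)]
  norm_num [F, neg_div]

lemma Antitone.hasSum_sub_comp_add {f : ℕ → ℝ} (hf : Antitone f)
    (hlim : Tendsto f atTop (𝓝 0)) (n : ℕ) :
    HasSum (fun k => f k - f (n + k)) (∑ i ∈ range n, f i) := by
  rw [hasSum_iff_tendsto_nat_of_nonneg fun k => sub_nonneg.2 (hf (k.le_add_left n))]
  have hpartial : ∀ K, ∑ k ∈ range K, (f k - f (n + k))
      = ∑ i ∈ range n, f i - ∑ i ∈ range n, f (K + i) := by
    intro K
    have h₁ := sum_range_add f K n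
    have h₂ := sum_range_add f n K
    rw [add_comm n K] at h₂
    rw [sum_sub_distrib]
    linarith
  have htail : Tendsto (fun K => ∑ i ∈ range n, f (K + i)) atTop (𝓝 0) := by
    simpa using tendsto_finsetSum (range n) fun i _ => hlim.comp (tendsto_add_atTop_nat i)
  simpa [hpartial] using tendsto_const_nhds.sub htail

lemma sum_range_succ_eq_sum_Icc {M : Type*} [AddCommMonoid M] (f : ℕ → M) (n : ℕ) :
    ∑ i ∈ range n, f (i + 1) = ∑ j ∈ Icc 1 n, f j := by
  rw [range_eq_Ico, sum_Ico_add' f 0 n 1, zero_add, Ico_add_one_right_eq_Icc]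

lemma hasSum_one_div_succ_sub_one_div_add_succ (n : ℕ) :
    HasSum (fun k : ℕ => 1 / ((k : ℝ) + 1) - 1 / ((n : ℝ) + k + 1))
      (∑ j ∈ Icc 1 n, (1 : ℝ) / j) := by
  have hf : Antitone fun k : ℕ => 1 / ((k : ℝ) + 1) := fun a b hab =>
    one_div_le_one_div_of_le (by positivity) (by gcongr)
  have := hf.hasSum_sub_comp_add tendsto_one_div_add_atTop_nhds_zero_nat n
  rw [← sum_range_succ_eq_sum_Icc]
  push_cast at this ⊢
  simpa only [add_assoc] using this

lemma hasSum_one_div_add_succ_sq (n : ℕ) :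
    HasSum (fun k : ℕ => 1 / ((n : ℝ) + k + 1) ^ 2)
      (π ^ 2 / 6 - ∑ j ∈ Icc 1 n, (1 : ℝ) / (j : ℝ) ^ 2) := by
  have := (hasSum_nat_add_iff' (n + 1)).2 hasSum_zeta_two
  rw [sum_range_succ', sum_range_succ_eq_sum_Icc (fun j => 1 / (j : ℝ) ^ 2)] at this
  have hzero : ∑ j ∈ Icc 1 n, (1 : ℝ) / (j : ℝ) ^ 2
      = ∑ j ∈ Icc 1 n, (1 : ℝ) / (j : ℝ) ^ 2 + 1 / ((0 : ℕ) : ℝ) ^ 2 := by simp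
  rw [hzero]
  exact this.congr_fun fun k => by push_cast; ring

lemma hasSum_one_div_succ_mul_add_succ_sq {n : ℕ} (hn : n ≠ 0) :
    HasSum (fun k : ℕ => 1 / (((k : ℝ) + 1) * ((n : ℝ) + k + 1) ^ 2))
      ((∑ j ∈ Icc 1 n, (1 : ℝ) / j) / (n : ℝ) ^ 2
        - (π ^ 2 / 6 - ∑ j ∈ Icc 1 n, (1 : ℝ) / (j : ℝ) ^ 2) / n) := by
  have hn' : (n : ℝ) ≠ 0 := Nat.cast_ne_zero.2 hn
  refine (((hasSum_one_div_succ_sub_one_div_add_succ n).div_const _).sub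
    ((hasSum_one_div_add_succ_sq n).div_const _)).congr_fun fun k => ?_
  field_simp
  ring

lemma hasSum_pow_mul_log_mul_log_one_sub {x : ℝ} (hx : |x| < 1) (m : ℕ) :
    HasSum (fun k : ℕ => -(x ^ (m + k + 1) * log x / (k + 1)))
      (x ^ m * log x * log (1 - x)) := by
  have := (hasSum_pow_div_log_of_abs_lt_one hx).mul_left (-(x ^ m * log x))
  rw [neg_mul_neg] at this
  exact this.congr_fun fun k => by ring

lemma hasSum_integral_pow_mul_log_mul_log_one_sub (m : ℕ) :
    HasSum (fun k : ℕ => 1 / (((k : ℝ) + 1) * ((m : ℝ) + k + 2) ^ 2))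
      (∫ x in (0 : ℝ)..1, x ^ m * log x * log (1 - x)) := by
  set F : ℕ → ℝ → ℝ := fun k x => -(x ^ (m + k + 1) * log x / (k + 1))
  have hF_integral : ∀ k, ∫ x in Set.Ioo (0 : ℝ) 1, F k x
      = 1 / (((k : ℝ) + 1) * ((m : ℝ) + k + 2) ^ 2) := by
    intro k
    rw [← integral_Ioc_eq_integral_Ioo, ← intervalIntegral.integral_of_le zero_le_one]
    simp only [F, intervalIntegral.integral_neg, intervalIntegral.integral_div,
      integral_pow_mul_log]
    push_cast
    field_simp
    ring
  have hF_nonneg : ∀ k, ∀ x ∈ Set.Ioo (0 : ℝ) 1, 0 ≤ F k x := fun k x hx =>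
    neg_nonneg.2 <| div_nonpos_of_nonpos_of_nonneg
      (mul_nonpos_of_nonneg_of_nonpos (pow_nonneg hx.1.le _) (log_nonpos hx.1.le hx.2.le))
      (by positivity)
  have hF_integrable : ∀ k, IntegrableOn (F k) (Set.Ioo 0 1) := fun k =>
    (((intervalIntegrable_pow_mul_log (m + k + 1) 0 1).div_const _).neg.1).mono_set
      Set.Ioo_subset_Ioc_self
  have hF_norm : ∀ k, ∫ x in Set.Ioo (0 : ℝ) 1, ‖F k x‖
      = 1 / (((k : ℝ) + 1) * ((m : ℝ) + k + 2) ^ 2) := fun k => by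
    rw [← hF_integral, setIntegral_congr_fun measurableSet_Ioo
      fun x hx => Real.norm_of_nonneg (hF_nonneg k x hx)]
  have hsum : Summable fun k : ℕ => 1 / (((k : ℝ) + 1) * ((m : ℝ) + k + 2) ^ 2) := by
    refine Summable.of_nonneg_of_le (fun k => ?_) (fun k => ?_)
      (hasSum_one_div_add_succ_sq (m + 1)).summable
    · positivity
    rw [show ((m + 1 : ℕ) : ℝ) + k + 1 = m + k + 2 by push_cast; ring]
    exact one_div_le_one_div_of_le (by positivity)
      (le_mul_of_one_le_left (by positivity) (by linarith [k.cast_nonneg (α := ℝ)]))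
  have := hasSum_integral_of_summable_integral_norm hF_integrable
    (hsum.congr fun k => (hF_norm k).symm)
  rw [intervalIntegral.integral_of_le zero_le_one, integral_Ioc_eq_integral_Ioo,
    setIntegral_congr_fun measurableSet_Ioo fun x hx =>
      (hasSum_pow_mul_log_mul_log_one_sub (abs_lt.2 ⟨by linarith [hx.1], hx.2⟩) m).tsum_eq.symm]
  simpa only [hF_integral] using this

theorem stmt_3 (n : ℕ) (hn : 1 ≤ n) :
    ∫ x in (0:ℝ)..1, x ^ (n - 1) * Real.log x * Real.log (1 - x)
      = (∑ j ∈ Finset.Icc 1 n, (1 : ℝ) / j) / (n : ℝ) ^ 2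
        - (Real.pi ^ 2 / 6 - ∑ j ∈ Finset.Icc 1 n, (1 : ℝ) / (j : ℝ) ^ 2) / n := by
  obtain ⟨m, rfl⟩ := Nat.exists_eq_add_of_le' hn
  refine (hasSum_integral_pow_mul_log_mul_log_one_sub m).unique ?_
  convert hasSum_one_div_succ_mul_add_succ_sq m.succ_ne_zero using 3 with k
  push_cast
  ring
end

section
/- For all integers n ≥ 1 and m ≥ 1, ∫₀¹ x^n (ln x)^m / (1-x) dx = (-1)^m · m! · (ζ(m+1) - ζ_n(m+1)), where ζ(m+1) is the Riemann zeta value and ζ_n(m+1) = ∑_{j=1}^n 1/j^{m+1}. -/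
/-!
Expanding `1 / (1 - x) = ∑ xʲ` reduces the integral to the moments `∫₀¹ xᵏ (log x)ᵐ`, which the
substitution `x = e^{-t}` turns into the Gamma integrals `(-1)ᵐ ∫₀^∞ tᵐ e^{-(k+1)t} dt
= (-1)ᵐ m! / (k+1)^{m+1}`. The moments for `k = n, n+1, …` are the tail of the zeta series past
`n`, and the interchange of sum and integral is justified because `(log x)ᵐ` has constant sign.
-/

/-- Riemann zeta value (real series). -/
noncomputable def rz (s : ℝ) : ℝ := ∑' n : ℕ, 1 / ((n : ℝ) + 1) ^ s

open Real MeasureTheory Set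
open scoped Nat

theorem integral_pow_mul_log_pow (k m : ℕ) :
    ∫ x in Ioo (0:ℝ) 1, x ^ k * log x ^ m = (-1) ^ m * m ! / ((k:ℝ) + 1) ^ (m + 1) := by
  have hsubst : ∫ x in Ioo (0:ℝ) 1, x ^ k * log x ^ m
      = ∫ t in Ioi (0:ℝ), (-1) ^ m * (t ^ (((m:ℝ) + 1) - 1) * exp (-(((k:ℝ) + 1) * t))) := by
    have hIoo : Ioo (0:ℝ) 1 = exp '' Iio (-0) := by rw [neg_zero, image_exp_Iio, exp_zero]
    rw [hIoo, integral_image_eq_integral_abs_deriv_smul measurableSet_Iio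
      (fun t _ => (hasDerivAt_exp t).hasDerivWithinAt) exp_injective.injOn,
      ← integral_Iic_eq_integral_Iio, ← integral_comp_neg_Ioi]
    refine setIntegral_congr_fun measurableSet_Ioi fun t _ => ?_
    rw [add_sub_cancel_right, rpow_natCast, abs_of_pos (exp_pos _), log_exp, ← exp_nat_mul,
      smul_eq_mul, ← mul_assoc, ← exp_add, neg_pow]
    ring_nf
  rw [hsubst, integral_const_mul, integral_rpow_mul_exp_neg_mul_Ioi (by positivity) (by positivity),
    Gamma_nat_eq_factorial, one_div, inv_rpow (by positivity), ← Nat.cast_add_one m,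
    rpow_natCast]
  ring

-- A non-integrable function has Bochner integral `0`, so the nonzero value above certifies
-- integrability.
theorem integrableOn_pow_mul_log_pow (k m : ℕ) :
    IntegrableOn (fun x : ℝ => x ^ k * log x ^ m) (Ioo 0 1) :=
  Integrable.of_integral_ne_zero (by rw [integral_pow_mul_log_pow]; positivity)

theorem integral_norm_pow_mul_log_pow (k m : ℕ) :
    ∫ x in Ioo (0:ℝ) 1, ‖x ^ k * log x ^ m‖ = m ! / ((k:ℝ) + 1) ^ (m + 1) := by
  have hnorm : ∀ x ∈ Ioo (0:ℝ) 1, ‖x ^ k * log x ^ m‖ = (-1) ^ m * (x ^ k * log x ^ m) := by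
    intro x hx
    rw [norm_mul, norm_pow, norm_pow, norm_of_nonneg hx.1.le,
      norm_of_nonpos (log_nonpos hx.1.le hx.2.le), neg_pow]
    ring
  rw [setIntegral_congr_fun measurableSet_Ioo hnorm, integral_const_mul,
    integral_pow_mul_log_pow, ← mul_div_assoc, ← mul_assoc, ← mul_pow]
  norm_num

theorem summable_one_div_add_one_pow {p : ℕ} (hp : 1 < p) :
    Summable fun i : ℕ => 1 / ((i:ℝ) + 1) ^ p := by
  exact_mod_cast (summable_nat_add_iff 1).mpr (summable_one_div_nat_pow.mpr hp)

theorem hasSum_integral_pow_mul_log_pow_div_one_sub (n : ℕ) {m : ℕ} (hm : 1 ≤ m) :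
    HasSum (fun j : ℕ => (-1) ^ m * m ! / (((j + n : ℕ) : ℝ) + 1) ^ (m + 1))
      (∫ x in Ioo (0:ℝ) 1, x ^ n * log x ^ m / (1 - x)) := by
  have hgeom : ∀ x ∈ Ioo (0:ℝ) 1,
      ∑' j : ℕ, x ^ (j + n) * log x ^ m = x ^ n * log x ^ m / (1 - x) := by
    intro x hx
    simp_rw [pow_add, mul_assoc]
    rw [tsum_mul_right, tsum_geometric_of_lt_one hx.1.le hx.2, inv_mul_eq_div]
  have hsummable : Summable fun j : ℕ => ∫ x in Ioo (0:ℝ) 1, ‖x ^ (j + n) * log x ^ m‖ := by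
    simp_rw [integral_norm_pow_mul_log_pow, div_eq_mul_one_div (m ! : ℝ)]
    exact ((summable_nat_add_iff n).mpr (summable_one_div_add_one_pow (by omega))).mul_left _
  rw [← setIntegral_congr_fun measurableSet_Ioo hgeom]
  simp_rw [← integral_pow_mul_log_pow]
  exact hasSum_integral_of_summable_integral_norm
    (fun j => integrableOn_pow_mul_log_pow (j + n) m) hsummable

theorem hasSum_rz_sub_sum_Icc (n : ℕ) {p : ℕ} (hp : 1 < p) :
    HasSum (fun j : ℕ => 1 / (((j + n : ℕ) : ℝ) + 1) ^ p)
      (rz p - ∑ j ∈ Finset.Icc 1 n, 1 / (j : ℝ) ^ p) := by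
  have hrz : rz p = ∑' i : ℕ, 1 / ((i:ℝ) + 1) ^ p := by simp only [rz, rpow_natCast]
  have hpartial : ∑ j ∈ Finset.Icc 1 n, 1 / (j : ℝ) ^ p
      = ∑ i ∈ Finset.range n, 1 / ((i:ℝ) + 1) ^ p := by
    have hshift := Finset.sum_Ico_add' (fun j : ℕ => 1 / (j : ℝ) ^ p) 0 n 1
    push_cast at hshift
    rw [Finset.range_eq_Ico, hshift, Finset.Ico_add_one_right_eq_Icc]
  rw [hrz, hpartial]
  exact_mod_cast (hasSum_nat_add_iff' n).mpr (summable_one_div_add_one_pow hp).hasSum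

theorem stmt_6_general (n m : ℕ) (hm : 1 ≤ m) :
    ∫ x in (0:ℝ)..1, x ^ n * (Real.log x) ^ m / (1 - x)
      = (-1 : ℝ) ^ m * (Nat.factorial m)
          * (rz ((m : ℝ) + 1) - ∑ j ∈ Finset.Icc 1 n, (1 : ℝ) / (j : ℝ) ^ (m + 1)) := by
  have htail := hasSum_rz_sub_sum_Icc n (p := m + 1) (by omega)
  rw [Nat.cast_add_one] at htail
  rw [intervalIntegral.integral_of_le zero_le_one, integral_Ioc_eq_integral_Ioo]
  refine (hasSum_integral_pow_mul_log_pow_div_one_sub n hm).unique ?_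
  simpa only [mul_one_div] using htail.mul_left ((-1 : ℝ) ^ m * m !)

theorem stmt_6 (n m : ℕ) (hn : 1 ≤ n) (hm : 1 ≤ m) :
    ∫ x in (0:ℝ)..1, x ^ n * (Real.log x) ^ m / (1 - x)
      = (-1 : ℝ) ^ m * (Nat.factorial m)
          * (rz ((m : ℝ) + 1) - ∑ j ∈ Finset.Icc 1 n, (1 : ℝ) / (j : ℝ) ^ (m + 1)) :=
  stmt_6_general n m hm
end

section
/- For every integer m ≥ 0, the multiple zeta star value ζ*(2,{1}_m) = ∑_{n₁ ≥ n₂ ≥ ⋯ ≥ n_{m+1} ≥ 1} 1/(n₁² n₂ ⋯ n_{m+1}) equals (m+1)·ζ(m+2). -/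
/-- Multiple zeta star value. -/
noncomputable def mzvStar : List ℝ → ℝ
  | [] => 1
  | s :: t => ∑' k : ℕ, (1 / ((k : ℝ) + 1) ^ s) * mhStar t (k + 1)

open Real Finset MeasureTheory
open scoped Nat

/-!
Write `H_m(n)` for `mhStar (List.replicate m 1) n`. Dilcher's identity
`H_m(n+1)/(n+1) = ∑_{i ≤ n} (-1)^i C(n,i)/(i+1)^(m+1)`, combined with the binomial expansion of
`(1 - e^{-u})^k` and the Gamma integral, gives
`∫_0^∞ u^m e^{-u} (1 - e^{-u})^k du = m! H_m(k+1)/(k+1)`.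
Dividing by `k+1` and summing over `k`, the logarithmic series turns the integrand into
`u^(m+1) e^{-u}/(1 - e^{-u}) = ∑_j u^(m+1) e^{-(j+1)u}`, whose terms integrate to
`(m+1)!/(j+1)^(m+2)`. All terms are nonnegative, so both interchanges of sum and integral are
monotone convergence, and no growth estimate for `H_m` is needed.
-/

lemma mhStar_one_cons (l : List ℝ) (n : ℕ) :
    mhStar (1 :: l) n = ∑ k ∈ range n, mhStar l (k + 1) / (k + 1) := by
  rw [mhStar, ← Ico_add_one_right_eq_Icc, sum_Ico_eq_sum_range]
  refine sum_congr rfl fun k _ => ?_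
  push_cast
  rw [rpow_one, add_comm 1 k]
  ring

lemma Nat.cast_choose_div_add_one (n i : ℕ) :
    (n.choose i : ℝ) / (i + 1) = ((n + 1).choose (i + 1) : ℝ) / (n + 1) := by
  rw [div_eq_div_iff (by positivity) (by positivity)]
  exact_mod_cast (Nat.add_one_mul_choose_eq n i).symm.trans (mul_comm _ _) |>.symm

lemma sum_range_neg_one_pow_mul_choose_div (n : ℕ) :
    ∑ i ∈ range (n + 1), (-1) ^ i * (n.choose i : ℝ) / (i + 1) = 1 / (n + 1) := by
  have h := Int.alternating_sum_range_choose_of_ne (n := n + 1) n.succ_ne_zero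
  rw [sum_range_succ'] at h
  have h' : ∑ i ∈ range (n + 1), (-1) ^ i * ((n + 1).choose (i + 1) : ℝ) = 1 := by
    have := congrArg (Int.cast : ℤ → ℝ) h
    push_cast at this
    simp only [pow_succ, mul_neg_one, neg_mul, sum_neg_distrib, Nat.choose_zero_right,
      Nat.cast_one, one_mul] at this
    linarith
  simp_rw [mul_div_assoc, Nat.cast_choose_div_add_one, ← mul_div_assoc, ← sum_div, h']

lemma mhStar_replicate_one_succ_div (m n : ℕ) :
    mhStar (List.replicate m 1) (n + 1) / (n + 1) =
      ∑ i ∈ range (n + 1), (-1) ^ i * (n.choose i : ℝ) / (i + 1) ^ (m + 1) := by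
  induction m generalizing n with
  | zero => simpa [mhStar] using (sum_range_neg_one_pow_mul_choose_div n).symm
  | succ m ih =>
    have hsum : ∑ k ∈ range (n + 1), ∑ i ∈ range (k + 1),
          (-1) ^ i * (k.choose i : ℝ) / (i + 1) ^ (m + 1) =
        ∑ i ∈ range (n + 1), (-1) ^ i / (i + 1) ^ (m + 1) * ((n + 1).choose (i + 1) : ℝ) := by
      rw [sum_comm' (t' := range (n + 1)) (s' := fun i => Icc i n)]
      · refine sum_congr rfl fun i _ => ?_
        rw [← Nat.sum_Icc_choose, Nat.cast_sum, mul_sum]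
        exact sum_congr rfl fun k _ => by ring
      · intro k i; simp only [Finset.mem_range, Finset.mem_Icc]; omega
    rw [List.replicate_succ, mhStar_one_cons]
    simp_rw [ih]
    rw [hsum, sum_div]
    refine sum_congr rfl fun i _ => ?_
    rw [mul_div_assoc, ← Nat.cast_choose_div_add_one]
    field_simp
    ring

-- No summability is needed: for a divergent series both sides are `0`.
lemma ENNReal.toReal_tsum_ofReal {ι : Type*} {f : ι → ℝ} (hf : ∀ i, 0 ≤ f i) :
    (∑' i, ENNReal.ofReal (f i)).toReal = ∑' i, f i := by
  rw [ENNReal.tsum_toReal_eq fun _ => ENNReal.ofReal_ne_top]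
  exact tsum_congr fun i => ENNReal.toReal_ofReal (hf i)

lemma tsum_integral_eq_toReal_lintegral_of_hasSum {ι α : Type*} [Countable ι]
    [MeasurableSpace α] {μ : Measure α} {f : ι → α → ℝ} {g : α → ℝ}
    (hf : ∀ i, Integrable (f i) μ) (hf_nonneg : ∀ i, 0 ≤ᵐ[μ] f i)
    (hfg : ∀ᵐ x ∂μ, HasSum (fun i => f i x) (g x)) :
    ∑' i, ∫ x, f i x ∂μ = (∫⁻ x, ENNReal.ofReal (g x) ∂μ).toReal := by
  rw [← ENNReal.toReal_tsum_ofReal fun i => integral_nonneg_of_ae (hf_nonneg i)]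
  simp_rw [ofReal_integral_eq_lintegral_ofReal (hf _) (hf_nonneg _)]
  rw [← lintegral_tsum fun i => (hf i).aemeasurable.ennreal_ofReal]
  congr 1
  refine lintegral_congr_ae ?_
  filter_upwards [hfg, ae_all_iff.2 hf_nonneg] with x hx hx_nonneg
  rw [← ENNReal.ofReal_tsum_of_nonneg hx_nonneg hx.summable, hx.tsum_eq]

section

open Set

lemma integral_pow_mul_exp_neg_mul_Ioi (m : ℕ) {b : ℝ} (hb : 0 < b) :
    ∫ t in Ioi 0, t ^ m * exp (-(b * t)) = m ! / b ^ (m + 1) := by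
  have h := integral_rpow_mul_exp_neg_mul_Ioi (a := m + 1) (by positivity) hb
  simp only [add_sub_cancel_right, rpow_natCast] at h
  rw [h, Gamma_nat_eq_factorial, div_rpow zero_le_one hb.le, one_rpow, ← Nat.cast_add_one,
    rpow_natCast]
  ring

lemma integrableOn_pow_mul_exp_neg_mul_Ioi (m : ℕ) {b : ℝ} (hb : 0 < b) :
    IntegrableOn (fun t => t ^ m * exp (-(b * t))) (Ioi 0) :=
  .of_integral_ne_zero (by rw [integral_pow_mul_exp_neg_mul_Ioi m hb]; positivity)

lemma pow_mul_exp_neg_mul_one_sub_exp_neg_pow (m k : ℕ) (u : ℝ) :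
    u ^ m * exp (-u) * (1 - exp (-u)) ^ k =
      ∑ i ∈ range (k + 1), (-1) ^ i * (k.choose i : ℝ) * (u ^ m * exp (-((i + 1) * u))) := by
  rw [sub_eq_neg_add, add_pow, mul_sum]
  refine sum_congr rfl fun i _ => ?_
  rw [one_pow, mul_one, neg_pow, ← exp_nat_mul, add_mul, one_mul, neg_add, exp_add]
  ring_nf

lemma integrableOn_pow_mul_exp_neg_mul_one_sub_exp_neg_pow (m k : ℕ) :
    IntegrableOn (fun u => u ^ m * exp (-u) * (1 - exp (-u)) ^ k) (Ioi 0) := by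
  simp_rw [pow_mul_exp_neg_mul_one_sub_exp_neg_pow]
  exact integrable_finsetSum _ fun i _ =>
    (integrableOn_pow_mul_exp_neg_mul_Ioi m (by positivity)).const_mul _

lemma integral_pow_mul_exp_neg_mul_one_sub_exp_neg_pow (m k : ℕ) :
    ∫ u in Ioi 0, u ^ m * exp (-u) * (1 - exp (-u)) ^ k =
      m ! * (mhStar (List.replicate m 1) (k + 1) / (k + 1)) := by
  simp_rw [pow_mul_exp_neg_mul_one_sub_exp_neg_pow]
  rw [integral_finsetSum _ fun i _ =>
    (integrableOn_pow_mul_exp_neg_mul_Ioi m (by positivity)).const_mul _]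
  simp_rw [integral_const_mul, integral_pow_mul_exp_neg_mul_Ioi m (Nat.cast_add_one_pos _),
    mhStar_replicate_one_succ_div, mul_sum]
  refine sum_congr rfl fun i _ => ?_
  ring

lemma hasSum_pow_mul_exp_neg_mul_one_sub_exp_neg_pow_div (m : ℕ) {u : ℝ} (hu : 0 < u) :
    HasSum (fun k : ℕ => u ^ m * exp (-u) * (1 - exp (-u)) ^ k / (k + 1))
      (u ^ (m + 1) * exp (-u) / (1 - exp (-u))) := by
  have hpos : 0 < 1 - exp (-u) := sub_pos.2 (exp_lt_one_iff.2 (neg_neg_of_pos hu))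
  have h := hasSum_pow_div_log_of_abs_lt_one (x := 1 - exp (-u))
    (by rw [abs_of_pos hpos]; linarith [exp_pos (-u)])
  rw [sub_sub_cancel, log_exp, neg_neg] at h
  rw [show u ^ (m + 1) * exp (-u) / (1 - exp (-u)) = u ^ m * exp (-u) / (1 - exp (-u)) * u by
    ring]
  refine (h.mul_left _).congr_fun fun k => ?_
  field_simp
  ring

lemma hasSum_pow_mul_exp_neg_mul (m : ℕ) {u : ℝ} (hu : 0 < u) :
    HasSum (fun j : ℕ => u ^ (m + 1) * exp (-((j + 1) * u)))
      (u ^ (m + 1) * exp (-u) / (1 - exp (-u))) := by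
  have h := hasSum_geometric_of_lt_one (exp_pos (-u)).le (exp_lt_one_iff.2 (neg_neg_of_pos hu))
  rw [div_eq_mul_inv]
  refine (h.mul_left _).congr_fun fun j => ?_
  rw [← exp_nat_mul, mul_assoc, ← exp_add]
  ring_nf

lemma factorial_mul_tsum_mhStar_replicate_one (m : ℕ) :
    (m ! : ℝ) * ∑' k : ℕ, mhStar (List.replicate m 1) (k + 1) / (k + 1) ^ 2 =
      (m + 1)! * ∑' j : ℕ, 1 / ((j : ℝ) + 1) ^ (m + 2) := by
  have hF := tsum_integral_eq_toReal_lintegral_of_hasSum (μ := volume.restrict (Ioi 0))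
    (fun k : ℕ => (integrableOn_pow_mul_exp_neg_mul_one_sub_exp_neg_pow m k).div_const (k + 1))
    (fun k => ae_restrict_of_forall_mem measurableSet_Ioi fun u (hu : 0 < u) => by
      have : exp (-u) ≤ 1 := exp_le_one_iff.2 (by linarith)
      have : 0 ≤ 1 - exp (-u) := by linarith
      positivity)
    (ae_restrict_of_forall_mem measurableSet_Ioi fun u hu =>
      hasSum_pow_mul_exp_neg_mul_one_sub_exp_neg_pow_div m hu)
  have hG := tsum_integral_eq_toReal_lintegral_of_hasSum (μ := volume.restrict (Ioi 0))
    (fun j : ℕ => integrableOn_pow_mul_exp_neg_mul_Ioi (m + 1) (Nat.cast_add_one_pos j))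
    (fun j => ae_restrict_of_forall_mem measurableSet_Ioi fun u (hu : 0 < u) => by positivity)
    (ae_restrict_of_forall_mem measurableSet_Ioi fun u hu => hasSum_pow_mul_exp_neg_mul m hu)
  calc (m ! : ℝ) * ∑' k : ℕ, mhStar (List.replicate m 1) (k + 1) / (k + 1) ^ 2
      = ∑' k : ℕ, ∫ u in Ioi 0, u ^ m * exp (-u) * (1 - exp (-u)) ^ k / (k + 1) := by
        rw [← tsum_mul_left]
        refine tsum_congr fun k => ?_
        rw [integral_div, integral_pow_mul_exp_neg_mul_one_sub_exp_neg_pow, mul_div_assoc,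
          div_div, ← sq]
    _ = ∑' j : ℕ, ∫ u in Ioi 0, u ^ (m + 1) * exp (-((j + 1) * u)) := hF.trans hG.symm
    _ = (m + 1)! * ∑' j : ℕ, 1 / ((j : ℝ) + 1) ^ (m + 2) := by
        rw [← tsum_mul_left]
        refine tsum_congr fun j => ?_
        rw [integral_pow_mul_exp_neg_mul_Ioi (m + 1) (Nat.cast_add_one_pos j)]
        ring

end

lemma mzvStar_two_cons (l : List ℝ) :
    mzvStar (2 :: l) = ∑' k : ℕ, mhStar l (k + 1) / (k + 1) ^ 2 := by
  rw [mzvStar]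
  refine tsum_congr fun k => ?_
  rw [← Nat.cast_ofNat, rpow_natCast]
  ring

lemma rz_natCast (s : ℕ) : rz s = ∑' n : ℕ, 1 / ((n : ℝ) + 1) ^ s := by
  simp_rw [rz, rpow_natCast]

theorem stmt_11 (m : ℕ) :
    mzvStar (2 :: List.replicate m 1) = ((m : ℝ) + 1) * rz ((m : ℝ) + 2) := by
  have hm : (m ! : ℝ) ≠ 0 := Nat.cast_ne_zero.2 m.factorial_ne_zero
  rw [mzvStar_two_cons, show (m : ℝ) + 2 = (m + 2 : ℕ) by push_cast; rfl, rz_natCast]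
  apply mul_left_cancel₀ hm
  rw [factorial_mul_tsum_mhStar_replicate_one, Nat.factorial_succ]
  push_cast
  ring
end

section
/- For all integers n ≥ 0 and m ≥ 0, the multiple harmonic star number satisfies ζ*_n({1}_m) = Y_m(n)/m!, where Y_m(n) is the complete exponential Bell polynomial evaluated at (H_n, 1!·ζ_n(2), 2!·ζ_n(3), …, (r-1)!·ζ_n(r), …). -/
/-- Complete exponential Bell polynomials, via the standard recurrence
`Y_{n+1} = ∑_{i=0}^{n} C(n,i) x_{n+1-i} Y_i`, `Y_0 = 1`. -/
noncomputable def bell (x : ℕ → ℝ) : ℕ → ℝ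
  | 0 => 1
  | n + 1 => ∑ i : Fin (n + 1), (n.choose i : ℝ) * x (n + 1 - i) * bell x i
  termination_by n => n
  decreasing_by exact i.isLt

open Finset

lemma bell_succ (x : ℕ → ℝ) (m : ℕ) :
    bell x (m + 1) = ∑ p ∈ antidiagonal m, (m.choose p.1 : ℝ) * x (p.2 + 1) * bell x p.1 := by
  rw [bell.eq_2, Fin.sum_univ_eq_sum_range (fun i => (m.choose i : ℝ) * x (m + 1 - i) * bell x i),
    Nat.sum_antidiagonal_eq_sum_range_succ_mk]
  refine sum_congr rfl fun i hi => ?_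
  rw [show m + 1 - i = m - i + 1 by have := mem_range.1 hi; omega]

/-- `∑ r ≥ 1, (r - 1)! c ^ r t ^ r / r! = -log (1 - c t)`. -/
noncomputable def logCoeff (c : ℝ) (r : ℕ) : ℝ := (r - 1).factorial * c ^ r

lemma sum_antidiagonal_choose_mul_logCoeff (c : ℝ) (g : ℕ → ℝ) (s : ℕ) :
    ∑ p ∈ antidiagonal (s + 1), ((s + 1).choose p.1 : ℝ) * logCoeff c (p.2 + 1) * g p.1
      = c * g (s + 1) + (s + 1) * c *
          ∑ p ∈ antidiagonal s, (s.choose p.1 : ℝ) * logCoeff c (p.2 + 1) * g p.1 := by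
  rw [Nat.sum_antidiagonal_succ', mul_sum]
  congr 1
  · simp [logCoeff]
  refine sum_congr rfl fun p hp => ?_
  obtain rfl : p.1 + p.2 = s := mem_antidiagonal.1 hp
  have key : ((p.1 + p.2 + 1).choose p.1 : ℝ) * (p.2 + 1)
      = (p.1 + p.2).choose p.1 * (p.1 + p.2 + 1) := by
    have := Nat.choose_mul_succ_eq (p.1 + p.2) p.1
    rw [show p.1 + p.2 + 1 - p.1 = p.2 + 1 by omega] at this
    exact_mod_cast this.symm
  simp only [logCoeff, Nat.add_sub_cancel, Nat.factorial_succ, Nat.cast_mul, pow_succ]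
  push_cast
  linear_combination (p.2.factorial * c ^ p.2 * c * c * g p.1) * key

lemma sum_antidiagonal_choose_mul_mul_pred (f g : ℕ → ℝ) (s : ℕ) :
    ∑ p ∈ antidiagonal (s + 1), ((s + 1).choose p.1 : ℝ) * p.1 * f p.2 * g (p.1 - 1)
      = (s + 1) * ∑ p ∈ antidiagonal s, (s.choose p.1 : ℝ) * f p.2 * g p.1 := by
  rw [Nat.sum_antidiagonal_succ, mul_sum]
  simp only [CharP.cast_eq_zero, mul_zero, zero_mul, zero_add, Nat.add_sub_cancel]
  refine sum_congr rfl fun p _ => ?_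
  have key := Nat.add_one_mul_choose_eq s p.1
  push_cast
  rw [show ((s + 1).choose (p.1 + 1) : ℝ) * (p.1 + 1) = (s + 1) * s.choose p.1 by
    exact_mod_cast key.symm]
  ring

theorem bell_add_logCoeff (x : ℕ → ℝ) (c : ℝ) (m : ℕ) :
    bell (x + logCoeff c) (m + 1) = bell x (m + 1) + (m + 1) * c * bell (x + logCoeff c) m := by
  set y := x + logCoeff c
  induction m using Nat.strong_induction_on with
  | _ m ih =>
  have hx : ∀ i ≤ m, bell x i = bell y i - i * c * bell y (i - 1) := by
    rintro (_ | k) hk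
    · simp [bell.eq_1]
    · rw [ih k (by omega)]
      push_cast
      ring
  have hdiff : bell y (m + 1) - bell x (m + 1)
      = ∑ p ∈ antidiagonal m, (m.choose p.1 : ℝ) * logCoeff c (p.2 + 1) * bell y p.1
        + c * ∑ p ∈ antidiagonal m, (m.choose p.1 : ℝ) * p.1 * x (p.2 + 1) * bell y (p.1 - 1) := by
    rw [bell_succ, bell_succ, mul_sum, ← sum_sub_distrib, ← sum_add_distrib]
    refine sum_congr rfl fun p hp => ?_
    rw [hx p.1 (HasAntidiagonal.antidiagonal.fst_le hp)]
    simp only [y, Pi.add_apply]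
    ring
  rcases m with _ | s
  · simp [logCoeff, bell.eq_1] at hdiff
    simp only [bell.eq_1, CharP.cast_eq_zero, zero_add]
    linear_combination hdiff
  · rw [sum_antidiagonal_choose_mul_logCoeff,
      sum_antidiagonal_choose_mul_mul_pred (fun j => x (j + 1)), bell_succ y s] at hdiff
    rw [bell_succ y s]
    simp only [y, Pi.add_apply, mul_add, add_mul, sum_add_distrib] at hdiff ⊢
    push_cast
    linear_combination hdiff

lemma bell_zero_succ (m : ℕ) : bell 0 (m + 1) = 0 := by
  simp [bell_succ]

noncomputable def zetaCoeff (n r : ℕ) : ℝ :=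
  (r - 1).factorial * ∑ j ∈ Icc 1 n, 1 / (j : ℝ) ^ r

lemma zetaCoeff_zero : zetaCoeff 0 = 0 := by
  ext r
  simp [zetaCoeff]

lemma zetaCoeff_succ (n : ℕ) : zetaCoeff (n + 1) = zetaCoeff n + logCoeff (1 / (n + 1)) := by
  ext r
  simp only [zetaCoeff, logCoeff, Pi.add_apply, sum_Icc_succ_top (Nat.le_add_left 1 n)]
  push_cast
  ring

lemma bell_zetaCoeff_succ_div_factorial (n m : ℕ) :
    bell (zetaCoeff n) (m + 1) / (m + 1).factorial
      = ∑ k ∈ Icc 1 n, 1 / (k : ℝ) * (bell (zetaCoeff k) m / m.factorial) := by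
  induction n with
  | zero => simp [zetaCoeff_zero, bell_zero_succ]
  | succ n ih =>
    rw [sum_Icc_succ_top (Nat.le_add_left 1 n), ← ih, zetaCoeff_succ n, bell_add_logCoeff,
      ← zetaCoeff_succ, Nat.factorial_succ]
    push_cast
    field_simp

theorem stmt_16 (n m : ℕ) :
    mhStar (List.replicate m 1) n
      = bell (fun r => (Nat.factorial (r - 1) : ℝ) * ∑ j ∈ Finset.Icc 1 n, (1 : ℝ) / (j : ℝ) ^ r) m
          / (Nat.factorial m : ℝ) := by
  change _ = bell (zetaCoeff n) m / _
  induction m generalizing n with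
  | zero => simp [mhStar, bell.eq_1]
  | succ m ih =>
    rw [List.replicate_succ, mhStar, bell_zetaCoeff_succ_div_factorial]
    refine sum_congr rfl fun k _ => ?_
    rw [ih k, Real.rpow_one]
end
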